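/- Let $\theta > k \ge 1$ and let $\{X^j\}$ be a finite collection of points in $\mathbb{R}^n$ forming the scaled lattice $X^j = L \cdot q^j$ where $q^j$ ranges over integer points of $[0,m]^k \times \{0\} \subset \mathbb{R}^n$ and $L > 1$. Let $\Omega_i = \{y : |y - X^i| \le |y - X^j| \ \forall j\}$. Then there is a constant $C = C(\theta, k, n) > 1$, independent of $m$ and $L$, such that for every $i$ and every $y \in \Omega_i$ with $|y - X^i| \le L$: $$\frac{1}{(1+|y-X^i|)^{\theta}} \le \sum_j \frac{1}{(1+|y-X^j|)^{\theta}} \le \frac{C}{(1+|y-X^i|)^{\theta}}.$$ -/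

import Mathlib

/-!
For each coordinate `i`, write `d i = |q^j_i - q^i_i|`. If `d i ≥ 2`, the triangle inequality
and `|y - X^i| ≤ L` give `|y - X^j| ≥ L (d i - 1) ≥ L d i / 2`; if `d i ≤ 2`, the Voronoi
condition suffices. Either way `(1 + |y - X^i|) (1 + d i) ≤ 6 (1 + |y - X^j|)` for every `i`,
so `(1 + |y - X^j|)^{-θ} ≤ (6 / (1 + |y - X^i|))^θ ∏ᵢ (1 + d i)^{-θ/k}`. Summing over `j`, the
product of one-dimensional sums is at most `(∑_{z ∈ ℤ} (1 + |z|)^{-θ/k})^k`, finite as `θ/k > 1`.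
-/

open Real

/-- The scaled lattice point of `ℝ^n` associated to `q : Fin k → Fin (m+1)` and spacing `L`:
its first `k` coordinates are `L * q i` and the remaining ones vanish. -/
noncomputable def latticePt (n k m : ℕ) (L : ℝ) (q : Fin k → Fin (m + 1)) :
    EuclideanSpace ℝ (Fin n) :=
  WithLp.toLp 2 (fun i : Fin n => if h : (i : ℕ) < k then L * ((q ⟨i, h⟩ : ℕ) : ℝ) else 0)

lemma summable_one_add_abs_int_rpow_neg {s : ℝ} (hs : 1 < s) :
    Summable fun z : ℤ => (1 + |(z : ℝ)|) ^ (-s) := by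
  refine (summable_abs_int_rpow hs).of_norm_bounded_eventually ?_
  filter_upwards [Filter.eventually_cofinite_ne 0] with z hz
  have hz' : 0 < |(z : ℝ)| := by positivity
  rw [Real.norm_of_nonneg (by positivity)]
  exact rpow_le_rpow_of_nonpos hz' (by linarith) (by linarith)

lemma sum_fin_le_tsum_int {f : ℤ → ℝ} (hf : Summable f) (hf0 : ∀ z, 0 ≤ f z) (N : ℕ) (a : ℤ) :
    ∑ c : Fin N, f ((c : ℕ) - a) ≤ ∑' z, f z := by
  rw [← tsum_fintype (L := SummationFilter.unconditional _)]
  refine tsum_comp_le_tsum_of_inj hf hf0 (i := fun c : Fin N => ((c : ℕ) : ℤ) - a) ?_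
  intro c c' h
  simpa [Fin.val_inj] using h

lemma latticePt_apply_castLE {n k m : ℕ} (hkn : k ≤ n) (L : ℝ) (q : Fin k → Fin (m + 1))
    (i : Fin k) : latticePt n k m L q (Fin.castLE hkn i) = L * (q i : ℕ) := by
  simp [latticePt]

lemma mul_abs_sub_le_dist_latticePt {n k m : ℕ} (hkn : k ≤ n) {L : ℝ} (hL : 0 ≤ L)
    (q q' : Fin k → Fin (m + 1)) (i : Fin k) :
    L * |((q' i : ℕ) : ℝ) - (q i : ℕ)| ≤ dist (latticePt n k m L q) (latticePt n k m L q') := by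
  have := PiLp.dist_apply_le (latticePt n k m L q) (latticePt n k m L q') (Fin.castLE hkn i)
  rwa [latticePt_apply_castLE, latticePt_apply_castLE, Real.dist_eq, ← mul_sub, abs_mul,
    abs_of_nonneg hL, abs_sub_comm] at this

lemma one_add_dist_mul_one_add_le {X : Type*} [PseudoMetricSpace X] {x x' y : X} {L d : ℝ}
    (hL : 1 ≤ L) (hsep : L * d ≤ dist x x') (hnear : dist y x ≤ L)
    (hclosest : dist y x ≤ dist y x') : (1 + dist y x) * (1 + d) ≤ 6 * (1 + dist y x') := by
  have htri := dist_triangle_left x x' y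
  rcases le_total d 2 with hd | hd
  · nlinarith [dist_nonneg (x := y) (y := x)]
  · nlinarith [dist_nonneg (x := y) (y := x)]

lemma rpow_neg_le_prod_rpow_neg_div_card {ι : Type*} [Fintype ι] {x : ι → ℝ} {R θ : ℝ}
    (hx : ∀ i, 0 < x i) (hxR : ∀ i, x i ≤ R) (hR : 1 ≤ R) (hθ : 0 ≤ θ) :
    R ^ (-θ) ≤ ∏ i, x i ^ (-(θ / Fintype.card ι)) := by
  rcases isEmpty_or_nonempty ι with hι | hι
  · simpa using rpow_le_one_of_one_le_of_nonpos hR (neg_nonpos.2 hθ)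
  have hcard : (Fintype.card ι : ℝ) ≠ 0 := by positivity
  calc R ^ (-θ) = ∏ _i : ι, R ^ (-(θ / Fintype.card ι)) := by
        rw [Finset.prod_const, Finset.card_univ, ← rpow_mul_natCast (by linarith)]
        field_simp
    _ ≤ ∏ i, x i ^ (-(θ / Fintype.card ι)) :=
        Finset.prod_le_prod (fun _ _ => by positivity) fun i _ =>
          rpow_le_rpow_of_nonpos (hx i) (hxR i) (neg_nonpos.2 (by positivity))

lemma one_div_one_add_dist_rpow_le_prod {X ι : Type*} [PseudoMetricSpace X] [Fintype ι]
    {x x' y : X} {L θ : ℝ} {d : ι → ℝ} (hL : 1 ≤ L) (hθ : 0 ≤ θ) (hd : ∀ i, 0 ≤ d i)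
    (hsep : ∀ i, L * d i ≤ dist x x') (hnear : dist y x ≤ L) (hclosest : dist y x ≤ dist y x') :
    1 / (1 + dist y x') ^ θ ≤
      (6 / (1 + dist y x)) ^ θ * ∏ i, (1 + d i) ^ (-(θ / Fintype.card ι)) := by
  have hP : 0 < 1 + dist y x := by positivity
  have hD : 0 < 1 + dist y x' := by positivity
  have hR : 1 ≤ 6 * (1 + dist y x') / (1 + dist y x) := by
    rw [one_le_div hP]; linarith
  have hxR : ∀ i, 1 + d i ≤ 6 * (1 + dist y x') / (1 + dist y x) := fun i => by
    rw [le_div_iff₀ hP, mul_comm]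
    exact one_add_dist_mul_one_add_le hL (hsep i) hnear hclosest
  calc 1 / (1 + dist y x') ^ θ
      = (6 / (1 + dist y x)) ^ θ * (6 * (1 + dist y x') / (1 + dist y x)) ^ (-θ) := by
        rw [rpow_neg (by positivity), div_rpow (by norm_num) hP.le,
          div_rpow (by positivity) hP.le, mul_rpow (by norm_num) hD.le]
        field_simp
    _ ≤ (6 / (1 + dist y x)) ^ θ * ∏ i, (1 + d i) ^ (-(θ / Fintype.card ι)) := by
        gcongr
        exact rpow_neg_le_prod_rpow_neg_div_card (fun i => by linarith [hd i]) hxR hR hθ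

lemma sum_prod_one_add_abs_rpow_neg_le {k m : ℕ} {θ : ℝ} (hθ : (k : ℝ) < θ)
    (a : Fin k → Fin (m + 1)) :
    ∑ q : Fin k → Fin (m + 1), ∏ i, (1 + |((q i : ℕ) : ℝ) - (a i : ℕ)|) ^ (-(θ / k)) ≤
      (∑' z : ℤ, (1 + |(z : ℝ)|) ^ (-(θ / k))) ^ k := by
  rw [← Fintype.prod_sum fun i (c : Fin (m + 1)) =>
    (1 + |((c : ℕ) : ℝ) - (a i : ℕ)|) ^ (-(θ / k))]
  calc ∏ i, ∑ c : Fin (m + 1), (1 + |((c : ℕ) : ℝ) - (a i : ℕ)|) ^ (-(θ / k))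
      ≤ ∏ _i : Fin k, ∑' z : ℤ, (1 + |(z : ℝ)|) ^ (-(θ / k)) := by
        refine Finset.prod_le_prod (fun _ _ => by positivity) fun i _ => ?_
        have hs : 1 < θ / k := (one_lt_div (mod_cast i.pos)).2 hθ
        simpa using sum_fin_le_tsum_int (summable_one_add_abs_int_rpow_neg hs)
          (fun _ => by positivity) (m + 1) (a i : ℕ)
    _ = (∑' z : ℤ, (1 + |(z : ℝ)|) ^ (-(θ / k))) ^ k := by simp

lemma one_le_tsum_one_add_abs_rpow_neg_pow {k : ℕ} {θ : ℝ} (hθ : (k : ℝ) < θ) :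
    1 ≤ (∑' z : ℤ, (1 + |(z : ℝ)|) ^ (-(θ / k))) ^ k := by
  rcases Nat.eq_zero_or_pos k with rfl | hk
  · simp
  have hs : 1 < θ / k := (one_lt_div (by positivity)).2 hθ
  exact one_le_pow₀ (by
    simpa using (summable_one_add_abs_int_rpow_neg hs).le_tsum 0 (fun _ _ => by positivity))

theorem stmt_11_general {n k : ℕ} (θ : ℝ) (hkn : k ≤ n) (hθ : (k : ℝ) < θ) :
    ∃ C : ℝ, 1 < C ∧ ∀ m : ℕ, 1 ≤ m → ∀ L : ℝ, 1 < L →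
      ∀ qi : Fin k → Fin (m + 1), ∀ y : EuclideanSpace ℝ (Fin n),
        (∀ qj : Fin k → Fin (m + 1),
          dist y (latticePt n k m L qi) ≤ dist y (latticePt n k m L qj)) →
        dist y (latticePt n k m L qi) ≤ L →
        1 / (1 + dist y (latticePt n k m L qi)) ^ θ ≤
          (∑ qj : Fin k → Fin (m + 1), 1 / (1 + dist y (latticePt n k m L qj)) ^ θ) ∧
        (∑ qj : Fin k → Fin (m + 1), 1 / (1 + dist y (latticePt n k m L qj)) ^ θ) ≤
          C / (1 + dist y (latticePt n k m L qi)) ^ θ := by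
  have hθ0 : 0 < θ := (Nat.cast_nonneg k).trans_lt hθ
  set W := ∑' z : ℤ, (1 + |(z : ℝ)|) ^ (-(θ / k))
  refine ⟨6 ^ θ * W ^ k, one_lt_mul_of_lt_of_le (one_lt_rpow (by norm_num) hθ0)
    (one_le_tsum_one_add_abs_rpow_neg_pow hθ), fun m _ L hL qi y hclosest hnear => ?_⟩
  refine ⟨Finset.single_le_sum (f := fun qj => 1 / (1 + dist y (latticePt n k m L qj)) ^ θ)
    (fun qj _ => by positivity) (Finset.mem_univ qi), ?_⟩
  set P := 1 + dist y (latticePt n k m L qi)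
  calc ∑ qj, 1 / (1 + dist y (latticePt n k m L qj)) ^ θ
      ≤ ∑ qj : Fin k → Fin (m + 1),
          (6 / P) ^ θ * ∏ i, (1 + |((qj i : ℕ) : ℝ) - (qi i : ℕ)|) ^ (-(θ / k)) := by
        refine Finset.sum_le_sum fun qj _ => ?_
        simpa using one_div_one_add_dist_rpow_le_prod hL.le hθ0.le (fun _ => abs_nonneg _)
          (mul_abs_sub_le_dist_latticePt hkn (by linarith) qi qj) hnear (hclosest qj)
    _ ≤ (6 / P) ^ θ * W ^ k := by
        rw [← Finset.mul_sum]
        gcongr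
        exact sum_prod_one_add_abs_rpow_neg_le hθ qi
    _ = 6 ^ θ * W ^ k / P ^ θ := by
        rw [div_rpow (by norm_num) (by positivity)]
        ring

theorem stmt_11 {n k : ℕ} (θ : ℝ) (hk : 1 ≤ k) (hkn : k ≤ n) (hθ : (k : ℝ) < θ) :
    ∃ C : ℝ, 1 < C ∧ ∀ m : ℕ, 1 ≤ m → ∀ L : ℝ, 1 < L →
      ∀ qi : Fin k → Fin (m + 1), ∀ y : EuclideanSpace ℝ (Fin n),
        (∀ qj : Fin k → Fin (m + 1),
          dist y (latticePt n k m L qi) ≤ dist y (latticePt n k m L qj)) →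
        dist y (latticePt n k m L qi) ≤ L →
        1 / (1 + dist y (latticePt n k m L qi)) ^ θ ≤
          (∑ qj : Fin k → Fin (m + 1), 1 / (1 + dist y (latticePt n k m L qj)) ^ θ) ∧
        (∑ qj : Fin k → Fin (m + 1), 1 / (1 + dist y (latticePt n k m L qj)) ^ θ) ≤
          C / (1 + dist y (latticePt n k m L qi)) ^ θ :=
  stmt_11_general θ hkn hθ
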